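/- Let C ⊆ X × G be a strongly regular T_f-orbit closure and H = {g ∈ G : C·g^{-1} = C}. Then for every x ∈ X there is g_x ∈ G with vertical section C_x = {g : (x,g) ∈ C} = g_x·H, the map γ : X → G/H, γ(x) = g_x·H, is continuous, and E_x(f) = g_x·H·g_x^{-1} for every x ∈ X. -/

import Mathlib

open Topology Pointwise Set Filter

section Defs

variable {X : Type*} [TopologicalSpace X] {G : Type*} [TopologicalSpace G] [Group G]

/-- The positive-iterate part of the cocycle generated by `f` over `T`:
`f(n,x) = f(T^{n-1}x) ⋯ f(Tx) · f(x)` for `n ≥ 1` and `f(0,x) = e`. -/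
def cocycleNat (T : X ≃ₜ X) (f : X → G) : ℕ → X → G
  | 0, _ => 1
  | n + 1, x => f ((T.toEquiv ^ n) x) * cocycleNat T f n x

/-- The cocycle generated by `f` over `T`, at integer times:
`f(n,x)` as above for `n ≥ 0` and `f(n,x) = f(-n, T^n x)⁻¹` for `n < 0`. -/
def cocycle (T : X ≃ₜ X) (f : X → G) (n : ℤ) (x : X) : G :=
  if 0 ≤ n then cocycleNat T f n.toNat x
  else (cocycleNat T f (-n).toNat ((T.toEquiv ^ n) x))⁻¹

/-- The `n`-th power of the skew product `T_f` on `X × G`: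
`T_f^n (x,g) = (T^n x, f(n,x)·g)`. -/
def skewPow (T : X ≃ₜ X) (f : X → G) (n : ℤ) (p : X × G) : X × G :=
  ((T.toEquiv ^ n) p.1, cocycle T f n p.1 * p.2)

/-- The `n`-th power of the skew product `T_f` acting on `X × G/H`:
`T_f^n (x, gH) = (T^n x, f(n,x)·gH)`. -/
def skewPowQ (T : X ≃ₜ X) (f : X → G) (H : Subgroup G) (n : ℤ) (p : X × (G ⧸ H)) :
    X × (G ⧸ H) :=
  ((T.toEquiv ^ n) p.1, cocycle T f n p.1 • p.2)

/-- The local essential range `E_x(f)`: all `g ∈ G` such that for every open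
neighbourhood `U` of `x` and every open neighbourhood `V` of the identity there are
`n ∈ ℤ` and `y ∈ U ∩ T⁻ⁿU` with `f(n,y) ∈ V·g`. -/
def essRange (T : X ≃ₜ X) (f : X → G) (x : X) : Set G :=
  {g | ∀ U : Set X, IsOpen U → x ∈ U → ∀ V : Set G, IsOpen V → (1 : G) ∈ V →
    ∃ n : ℤ, ∃ y ∈ U, (T.toEquiv ^ n) y ∈ U ∧ ∃ v ∈ V, cocycle T f n y = v * g}

/-- `P_x(f)`: the vertical section at `x` of the closure of the `T_f`-orbit of `(x,e)`. -/
def Pset (T : X ≃ₜ X) (f : X → G) (x : X) : Set G :=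
  {g | (x, g) ∈ closure (Set.range fun n : ℤ => skewPow T f n (x, 1))}

/-- `𝒟(f) = {x : E_x(f) = P_x(f)}`. -/
def Dset (T : X ≃ₜ X) (f : X → G) : Set X :=
  {x | essRange T f x = Pset T f x}

/-- Topological recurrence of the cocycle generated by `f`: for every open
neighbourhood `V` of the identity of `G` and every nonempty open `U ⊆ X` there is
`n ≠ 0` with `T⁻ⁿU ∩ U ∩ {x : f(n,x) ∈ V} ≠ ∅`. -/
def IsRecurrentCocycle (T : X ≃ₜ X) (f : X → G) : Prop :=
  ∀ V : Set G, IsOpen V → (1 : G) ∈ V → ∀ U : Set X, IsOpen U → U.Nonempty →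
    ∃ n : ℤ, n ≠ 0 ∧ ∃ x ∈ U, (T.toEquiv ^ n) x ∈ U ∧ cocycle T f n x ∈ V

/-- Minimality of a homeomorphism: every orbit is dense. -/
def IsMinimal (T : X ≃ₜ X) : Prop :=
  ∀ x : X, Dense (Set.range fun n : ℤ => (T.toEquiv ^ n) x)

/-- A consistent selection of subgroups for the cocycle generated by `f`: a family of
closed subgroups `H x ⊆ E_x(f)` with `H (Tⁿx) = f(n,x)·(H x)·f(n,x)⁻¹` depending
continuously on `x` for the Fell topology. -/
structure IsConsistentSelection (T : X ≃ₜ X) (f : X → G) (H : X → Subgroup G) : Prop where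
  isClosed : ∀ x : X, IsClosed (H x : Set G)
  subset_essRange : ∀ x : X, (H x : Set G) ⊆ essRange T f x
  conj : ∀ (x : X) (n : ℤ), (H ((T.toEquiv ^ n) x) : Set G) =
    (fun h => cocycle T f n x * h * (cocycle T f n x)⁻¹) '' (H x : Set G)
  fell_compact : ∀ (x : X) (K : Set G), IsCompact K → K ∩ (H x : Set G) = ∅ →
    ∃ W ∈ 𝓝 x, ∀ y ∈ W, K ∩ (H y : Set G) = ∅
  fell_open : ∀ (x : X) (O : Set G), IsOpen O → (O ∩ (H x : Set G)).Nonempty →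
    ∃ W ∈ 𝓝 x, ∀ y ∈ W, (O ∩ (H y : Set G)).Nonempty

/-- The `T_f`-orbit closure of a point of `X × G`. -/
def orbitClosure (T : X ≃ₜ X) (f : X → G) (p : X × G) : Set (X × G) :=
  closure (Set.range fun n : ℤ => skewPow T f n p)

/-- For `C ⊆ X × G`, the set `H = {g : C·g⁻¹ = C}`, where `C·g = {(y, c·g) : (y,c) ∈ C}`. -/
def stabSet (C : Set (X × G)) : Set G :=
  {g : G | (fun p : X × G => (p.1, p.2 * g⁻¹)) '' C = C}

/-- A strongly regular orbit closure: a `T_f`-orbit closure which projects onto all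
of `X` and all of whose vertical sections are single left cosets of
`H = {g : C·g⁻¹ = C}`. -/
def IsStronglyRegularOC (T : X ≃ₜ X) (f : X → G) (C : Set (X × G)) : Prop :=
  (∃ p : X × G, C = orbitClosure T f p) ∧ Prod.fst '' C = Set.univ ∧
    ∀ x : X, ∃ gx : G, {g : G | (x, g) ∈ C} = {gx} * stabSet C

/-- A strongly regular cocycle: one whose skew product admits a strongly regular
orbit closure. -/
def IsStronglyRegularCocycle (T : X ≃ₜ X) (f : X → G) : Prop :=
  ∃ C : Set (X × G), IsStronglyRegularOC T f C

/-- A regular cocycle: some `T_f`-orbit closure projects onto all of `X`. -/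
def IsRegularCocycle (T : X ≃ₜ X) (f : X → G) : Prop :=
  ∃ p : X × G, Prod.fst '' orbitClosure T f p = Set.univ

end Defs


/-! Since `C` is `T_f`-invariant and its sections are cosets of `H`, the map `γ : X → G/H`
reading off the section is equivariant, `γ (Tⁿ x) = f(n,x) • γ x`, and has closed graph.
By Baire's theorem `γ` takes values in a compact set over some nonempty open set, where a closed
graph forces continuity; minimality and equivariance spread continuity over all of `X`.
Continuity and equivariance give `E_x(f) ⊆ Stab(γ x) = g H g⁻¹`; conversely `(x, g)` and
`(x, g h)` both lie in the orbit closure, and approximating them by orbit points exhibits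
`g h g⁻¹` as an essential value. -/

section Cocycle

variable {X : Type*} [TopologicalSpace X] {G : Type*} [Group G] (T : X ≃ₜ X) (f : X → G)

theorem Homeomorph.continuous_toEquiv_zpow (n : ℤ) : Continuous (T.toEquiv ^ n) := by
  induction n using Int.induction_on with
  | zero => exact continuous_id
  | succ n ih =>
    rw [zpow_add_one, Equiv.Perm.coe_mul]
    exact ih.comp T.continuous
  | pred n ih =>
    rw [zpow_sub_one, Equiv.Perm.coe_mul]
    exact ih.comp T.symm.continuous

theorem cocycleNat_add (n m : ℕ) (x : X) :
    cocycleNat T f (n + m) x = cocycleNat T f n ((T.toEquiv ^ m) x) * cocycleNat T f m x := by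
  induction n with
  | zero => simp [cocycleNat]
  | succ n ih =>
    rw [Nat.add_right_comm, cocycleNat, ih, cocycleNat, pow_add, Equiv.Perm.mul_apply, mul_assoc]

theorem cocycle_zero (x : X) : cocycle T f 0 x = 1 := rfl

theorem cocycle_natCast (n : ℕ) (x : X) : cocycle T f n x = cocycleNat T f n x := by
  simp [cocycle]

theorem cocycle_neg_natCast (n : ℕ) (x : X) :
    cocycle T f (-n) x = (cocycleNat T f n ((T.toEquiv ^ (-n : ℤ)) x))⁻¹ := by
  rcases n with _ | n
  · simp [cocycle, cocycleNat]
  · rw [cocycle, if_neg (by omega), neg_neg, Int.toNat_natCast]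

theorem cocycle_add_one (n : ℤ) (x : X) :
    cocycle T f (n + 1) x = f ((T.toEquiv ^ n) x) * cocycle T f n x := by
  obtain ⟨k, rfl | rfl⟩ := Int.eq_nat_or_neg n
  · rw [← Nat.cast_succ, cocycle_natCast, cocycle_natCast, cocycleNat, zpow_natCast]
  · rcases k with _ | k
    · simp [cocycle, cocycleNat]
    · have hshift : (T.toEquiv ^ (1 : ℕ)) ((T.toEquiv ^ (-(k + 1 : ℕ) : ℤ)) x) =
          (T.toEquiv ^ (-k : ℤ)) x := by
        rw [← Equiv.Perm.mul_apply, ← zpow_natCast, ← zpow_add]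
        congr 2
        push_cast
        ring
      rw [show (-(k + 1 : ℕ) : ℤ) + 1 = -k by push_cast; ring, cocycle_neg_natCast,
        cocycle_neg_natCast, cocycleNat_add T f k 1, hshift]
      simp [cocycleNat]

theorem cocycle_sub_one (n : ℤ) (x : X) :
    cocycle T f (n - 1) x = (f ((T.toEquiv ^ (n - 1)) x))⁻¹ * cocycle T f n x := by
  rw [eq_inv_mul_iff_mul_eq, ← cocycle_add_one, sub_add_cancel]

theorem cocycle_add (n m : ℤ) (x : X) :
    cocycle T f (n + m) x = cocycle T f n ((T.toEquiv ^ m) x) * cocycle T f m x := by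
  induction n using Int.induction_on with
  | zero => rw [zero_add, cocycle_zero, one_mul]
  | succ n ih =>
    rw [add_right_comm, cocycle_add_one, ih, cocycle_add_one, zpow_add, Equiv.Perm.mul_apply,
      mul_assoc]
  | pred n ih =>
    rw [sub_add_eq_add_sub, cocycle_sub_one, ih, cocycle_sub_one,
      show -(n : ℤ) + m - 1 = -n - 1 + m by ring, zpow_add, Equiv.Perm.mul_apply, mul_assoc]

theorem continuous_cocycle [TopologicalSpace G] [IsTopologicalGroup G] (hf : Continuous f)
    (n : ℤ) : Continuous (cocycle T f n) := by
  induction n using Int.induction_on with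
  | zero => exact continuous_const
  | succ n ih =>
    rw [funext (cocycle_add_one T f n)]
    exact (hf.comp (T.continuous_toEquiv_zpow n)).mul ih
  | pred n ih =>
    rw [funext (cocycle_sub_one T f (-n))]
    exact (hf.comp (T.continuous_toEquiv_zpow _)).inv.mul ih

end Cocycle

section SkewProduct

variable {X : Type*} [TopologicalSpace X] {G : Type*} [Group G] (T : X ≃ₜ X) (f : X → G)

theorem skewPow_add (n m : ℤ) (p : X × G) :
    skewPow T f (n + m) p = skewPow T f n (skewPow T f m p) := by
  simp only [skewPow, zpow_add, Equiv.Perm.mul_apply, cocycle_add, mul_assoc]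

theorem continuous_skewPow [TopologicalSpace G] [IsTopologicalGroup G] (hf : Continuous f)
    (n : ℤ) : Continuous (skewPow T f n) :=
  ((T.continuous_toEquiv_zpow n).comp continuous_fst).prodMk
    (((continuous_cocycle T f hf n).comp continuous_fst).mul continuous_snd)

theorem skewPow_mem_orbitClosure [TopologicalSpace G] [IsTopologicalGroup G] (hf : Continuous f)
    {p q : X × G} (hq : q ∈ orbitClosure T f p) (n : ℤ) :
    skewPow T f n q ∈ orbitClosure T f p := by
  refine map_mem_closure (continuous_skewPow T f hf n) hq ?_
  rintro _ ⟨m, rfl⟩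
  exact ⟨n + m, skewPow_add T f n m p⟩

/-- Two points of an orbit closure on the same fibre are approximated by orbit points
`T_f^{n₁} p` and `T_f^{n₂} p`, and the cocycle `f(n₂ - n₁, T^{n₁} x₀)` then approximates
`g' g⁻¹`. -/
theorem mul_inv_mem_essRange_of_mem_orbitClosure [TopologicalSpace G] [IsTopologicalGroup G]
    {p : X × G} {x : X} {g g' : G} (hg : (x, g) ∈ orbitClosure T f p)
    (hg' : (x, g') ∈ orbitClosure T f p) :
    g' * g⁻¹ ∈ essRange T f x := by
  intro U hU hxU V hV h1V
  set φ : G × G → G := fun q => q.1 * q.2⁻¹ * (g' * g⁻¹)⁻¹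
  have hφ : Continuous φ := (continuous_fst.mul continuous_snd.inv).mul continuous_const
  obtain ⟨W', W, hW', hW, hgW', hgW, hWV⟩ :=
    isOpen_prod_iff.1 (hV.preimage hφ) g' g (by simpa [φ] using h1V)
  obtain ⟨_, ⟨hxU', hgW'⟩, n', rfl⟩ := mem_closure_iff.1 hg' _ (hU.prod hW') ⟨hxU, hgW'⟩
  obtain ⟨_, ⟨hxU, hgW⟩, n, rfl⟩ := mem_closure_iff.1 hg _ (hU.prod hW) ⟨hxU, hgW⟩
  refine ⟨n' - n, (T.toEquiv ^ n) p.1, hxU, ?_, _, hWV (mk_mem_prod hgW' hgW), ?_⟩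
  · rw [← Equiv.Perm.mul_apply, ← zpow_add, sub_add_cancel]
    exact hxU'
  · have hcoc := cocycle_add T f (n' - n) n p.1
    rw [sub_add_cancel, ← mul_inv_eq_iff_eq_mul] at hcoc
    simp only [φ, skewPow, ← hcoc]
    group

end SkewProduct

section ClosedGraph

variable {X Y : Type*} [TopologicalSpace X] [TopologicalSpace Y]

theorem continuousAt_of_isClosed_graph {γ : X → Y} {K : Set Y} {x : X} (hK : IsCompact K)
    (hγK : ∀ᶠ y in 𝓝 x, γ y ∈ K) (hgraph : IsClosed {p : X × Y | p.2 = γ p.1}) :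
    ContinuousAt γ x := by
  refine hK.tendsto_nhds_of_unique_mapClusterPt hγK fun y _ hy => ?_
  have hxy : (x, y) ∈ closure {p : X × Y | p.2 = γ p.1} := by
    rw [mem_closure_iff_nhds]
    intro W hW
    obtain ⟨s, hs, t, ht, hst⟩ := mem_nhds_prod_iff.1 hW
    obtain ⟨z, hzt, hzs⟩ := ((mapClusterPt_iff_frequently.1 hy t ht).and_eventually hs).exists
    exact ⟨(z, γ z), hst ⟨hzs, hzt⟩, rfl⟩
  exact hgraph.closure_subset hxy

/-- Baire category: the closed sets `γ⁻¹ Kₙ` cover `X`, so one of them has interior. -/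
theorem exists_isOpen_mapsTo_compactCovering [CompactSpace X] [T2Space X] [Nonempty X]
    [SigmaCompactSpace Y] {γ : X → Y} (hgraph : IsClosed {p : X × Y | p.2 = γ p.1}) :
    ∃ U : Set X, IsOpen U ∧ U.Nonempty ∧ ∃ n, MapsTo γ U (compactCovering Y n) := by
  have hclosed (n : ℕ) : IsClosed (γ ⁻¹' compactCovering Y n) := by
    have hcpt := (isCompact_univ.prod (isCompact_compactCovering Y n)).inter_left hgraph
    convert (hcpt.image continuous_fst).isClosed
    ext x
    simp
  have hcover : ⋃ n, γ ⁻¹' compactCovering Y n = univ := by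
    rw [← preimage_iUnion, iUnion_compactCovering, preimage_univ]
  obtain ⟨n, hn⟩ := nonempty_interior_of_iUnion_of_closed hclosed hcover
  exact ⟨_, isOpen_interior, hn, n, mapsTo_iff_subset_preimage.2 interior_subset⟩

end ClosedGraph

section Equivariant

variable {X : Type*} [TopologicalSpace X] {G : Type*} [TopologicalSpace G] [Group G]
  [IsTopologicalGroup G] {Y : Type*} [TopologicalSpace Y] [MulAction G Y] [ContinuousSMul G Y]
  (T : X ≃ₜ X) (f : X → G)

/-- Every orbit enters `U`, and `γ` is conjugated there by the continuous cocycle. -/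
theorem continuous_of_isMinimal (hT : IsMinimal T) (hf : Continuous f) {γ : X → Y}
    (hγ : ∀ n x, γ ((T.toEquiv ^ n) x) = cocycle T f n x • γ x) {U : Set X} (hU : IsOpen U)
    (hUne : U.Nonempty) (hγU : ∀ x ∈ U, ContinuousAt γ x) : Continuous γ := by
  refine continuous_iff_continuousAt.2 fun x => ?_
  obtain ⟨_, ⟨n, rfl⟩, hnU⟩ := (hT x).exists_mem_open hU hUne
  have hconj : γ = fun y => (cocycle T f n y)⁻¹ • γ ((T.toEquiv ^ n) y) :=
    funext fun y => by rw [hγ, inv_smul_smul]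
  rw [hconj]
  exact (continuous_cocycle T f hf n).continuousAt.inv.smul
    ((hγU _ hnU).comp (T.continuous_toEquiv_zpow n).continuousAt)

theorem continuous_of_isClosed_graph [CompactSpace X] [T2Space X] [SigmaCompactSpace Y]
    (hT : IsMinimal T) (hf : Continuous f) {γ : X → Y}
    (hγ : ∀ n x, γ ((T.toEquiv ^ n) x) = cocycle T f n x • γ x)
    (hgraph : IsClosed {p : X × Y | p.2 = γ p.1}) : Continuous γ := by
  rcases isEmpty_or_nonempty X with hX | hX
  · exact continuous_of_discreteTopology
  obtain ⟨U, hU, hUne, n, hγU⟩ := exists_isOpen_mapsTo_compactCovering hgraph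
  exact continuous_of_isMinimal T f hT hf hγ hU hUne fun x hx =>
    continuousAt_of_isClosed_graph (isCompact_compactCovering Y n)
      (eventually_of_mem (hU.mem_nhds hx) hγU) hgraph

theorem essRange_subset_stabilizer [T2Space Y] {γ : X → Y} (hγc : Continuous γ)
    (hγ : ∀ n x, γ ((T.toEquiv ^ n) x) = cocycle T f n x • γ x) (x : X) :
    essRange T f x ⊆ MulAction.stabilizer G (γ x) := by
  intro k hk
  by_contra hne
  obtain ⟨O₁, O₂, hO₁, hO₂, hkO₁, hxO₂, hdisj⟩ := t2_separation hne
  have hact : ContinuousAt (fun q : G × X => q.1 • γ q.2) (k, x) :=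
    (continuous_fst.smul (hγc.comp continuous_snd)).continuousAt
  obtain ⟨V', hV', U₁, hU₁, hprod⟩ := mem_nhds_prod_iff.1 (hact (hO₁.mem_nhds hkO₁))
  obtain ⟨U, hUsub, hU, hxU⟩ :=
    mem_nhds_iff.1 (inter_mem hU₁ (hγc.continuousAt.preimage_mem_nhds (hO₂.mem_nhds hxO₂)))
  obtain ⟨V, hVsub, hV, h1V⟩ := mem_nhds_iff.1
    ((continuous_mul_const k).continuousAt.preimage_mem_nhds (by simpa using hV') :
      (· * k) ⁻¹' V' ∈ 𝓝 (1 : G))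
  obtain ⟨n, y, hyU, hnyU, v, hv, hc⟩ := hk U hU hxU V hV h1V
  have hO₁' : γ ((T.toEquiv ^ n) y) ∈ O₁ := by
    rw [hγ, hc]
    exact hprod (mk_mem_prod (hVsub hv) (hUsub hyU).1)
  exact hdisj.ne_of_mem hO₁' (hUsub hnyU).2 rfl

end Equivariant

section CosetSections

variable {G : Type*} [Group G] {H : Subgroup G}

theorem mem_singleton_mul_iff_mk_eq (a g : G) : g ∈ {a} * (H : Set G) ↔ (g : G ⧸ H) = a := by
  rw [singleton_mul]
  constructor
  · rintro ⟨h, hh, rfl⟩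
    exact QuotientGroup.mk_mul_of_mem a hh
  · intro hg
    exact ⟨a⁻¹ * g, QuotientGroup.eq.1 hg.symm, mul_inv_cancel_left a g⟩

theorem QuotientGroup.coe_stabilizer_mk (g : G) :
    (MulAction.stabilizer G (g : G ⧸ H) : Set G) = (fun h => g * h * g⁻¹) '' H := by
  ext k
  rw [SetLike.mem_coe, MulAction.mem_stabilizer_iff]
  constructor
  · intro hk
    refine ⟨g⁻¹ * k * g, ?_, by group⟩
    have hmem : ((k * g)⁻¹ * g)⁻¹ ∈ H := H.inv_mem (QuotientGroup.eq.1 hk)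
    rwa [mul_inv_rev, inv_inv, ← mul_assoc] at hmem
  · rintro ⟨h, hh, rfl⟩
    change ((g * h * g⁻¹ * g : G) : G ⧸ H) = g
    rw [inv_mul_cancel_right, QuotientGroup.mk_mul_of_mem g hh]

variable {X : Type*} [TopologicalSpace X] {C : Set (X × G)} {γ : X → G ⧸ H}

theorem map_zpow_eq_cocycle_smul (T : X ≃ₜ X) (f : X → G)
    (hC : ∀ n q, q ∈ C → skewPow T f n q ∈ C)
    (hγ : ∀ x g, (x, g) ∈ C ↔ (g : G ⧸ H) = γ x)
    (n : ℤ) (x : X) : γ ((T.toEquiv ^ n) x) = cocycle T f n x • γ x := by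
  obtain ⟨g, hg⟩ := QuotientGroup.mk_surjective (γ x)
  rw [← (hγ _ _).1 (hC n (x, g) ((hγ x g).2 hg)), ← hg]
  rfl

theorem isClosed_graph_of_isClosed [TopologicalSpace G] [IsTopologicalGroup G] (hC : IsClosed C)
    (hγ : ∀ x g, (x, g) ∈ C ↔ (g : G ⧸ H) = γ x) :
    IsClosed {p : X × G ⧸ H | p.2 = γ p.1} := by
  have hπ := (IsOpenQuotientMap.id (X := X)).prodMap (QuotientGroup.isOpenQuotientMap_mk (N := H))
  rw [← hπ.isQuotientMap.isClosed_preimage]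
  convert hC
  ext ⟨x, g⟩
  exact (hγ x g).symm

theorem isClosed_subgroup_of_isClosed [TopologicalSpace G] [IsTopologicalGroup G]
    (hC : IsClosed C) (hγ : ∀ x g, (x, g) ∈ C ↔ (g : G ⧸ H) = γ x) (x : X) :
    IsClosed (H : Set G) := by
  obtain ⟨g, hg⟩ := QuotientGroup.mk_surjective (γ x)
  convert hC.preimage (continuous_const.prodMk (continuous_const_mul g)) using 1
  ext h
  rw [mem_preimage, hγ, ← hg, eq_comm, QuotientGroup.eq, inv_mul_cancel_left, SetLike.mem_coe]

end CosetSections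

theorem statement_17_general
    {X : Type*} [TopologicalSpace X] [CompactSpace X] [TopologicalSpace.MetrizableSpace X]
    {G : Type*} [TopologicalSpace G] [Group G] [IsTopologicalGroup G]
    [LocallyCompactSpace G] [SecondCountableTopology G]
    (T : X ≃ₜ X) (hT : IsMinimal T) (f : X → G) (hf : Continuous f)
    (C : Set (X × G)) (hC : IsStronglyRegularOC T f C)
    (H : Subgroup G) (hH : (H : Set G) = stabSet C) :
    ∃ γ : X → G ⧸ H, Continuous γ ∧
      (∀ x : X, {g : G | (x, g) ∈ C} =
        {g : G | (QuotientGroup.mk g : G ⧸ H) = γ x}) ∧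
      (∀ x : X, ∀ g : G, (x, g) ∈ C →
        essRange T f x = (fun h => g * h * g⁻¹) '' (H : Set G)) := by
  obtain ⟨⟨p, rfl⟩, -, hsec⟩ := hC
  choose gx hgx using hsec
  set γ : X → G ⧸ H := fun x => gx x
  have hγ (x : X) (g : G) : (x, g) ∈ orbitClosure T f p ↔ (g : G ⧸ H) = γ x := by
    rw [← mem_singleton_mul_iff_mk_eq, hH, ← hgx]
    rfl
  have hequiv :=
    map_zpow_eq_cocycle_smul T f (fun n q hq => skewPow_mem_orbitClosure T f hf hq n) hγ
  have hcont : Continuous γ :=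
    continuous_of_isClosed_graph T f hT hf hequiv (isClosed_graph_of_isClosed isClosed_closure hγ)
  refine ⟨γ, hcont, fun x => Set.ext fun g => hγ x g, fun x g hxg => ?_⟩
  have : IsClosed (H : Set G) := isClosed_subgroup_of_isClosed isClosed_closure hγ x
  refine Subset.antisymm ?_ ?_
  · rw [← QuotientGroup.coe_stabilizer_mk, (hγ x g).1 hxg]
    exact essRange_subset_stabilizer T f hcont hequiv x
  · rintro _ ⟨h, hh, rfl⟩
    refine mul_inv_mem_essRange_of_mem_orbitClosure T f hxg ((hγ x _).2 ?_)
    rw [QuotientGroup.mk_mul_of_mem g hh, (hγ x g).1 hxg]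

theorem statement_17
    {X : Type*} [TopologicalSpace X] [CompactSpace X] [TopologicalSpace.MetrizableSpace X]
    {G : Type*} [TopologicalSpace G] [Group G] [IsTopologicalGroup G]
    [LocallyCompactSpace G] [SecondCountableTopology G] [T2Space G]
    (T : X ≃ₜ X) (hT : IsMinimal T) (f : X → G) (hf : Continuous f)
    (C : Set (X × G)) (hC : IsStronglyRegularOC T f C)
    (H : Subgroup G) (hH : (H : Set G) = stabSet C) :
    ∃ γ : X → G ⧸ H, Continuous γ ∧
      (∀ x : X, {g : G | (x, g) ∈ C} =
        {g : G | (QuotientGroup.mk g : G ⧸ H) = γ x}) ∧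
      (∀ x : X, ∀ g : G, (x, g) ∈ C →
        essRange T f x = (fun h => g * h * g⁻¹) '' (H : Set G)) :=
  statement_17_general T hT f hf C hC H hH
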